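/- Completeness of the score construction in the literal-free case: for every instance I of schema S, every mapping m ∈ ⟦A⟧_I, and every triple t ∈ m(C) \ I, there exist a conjunctive query q ∈ Q(A), a mapping m* ∈ ⟦q⟧_{S(S)}, and a pattern c ∈ C such that t is an instance of the triple pattern unpack(m*({c})); hence every triple inferable by one application of r on any instance of S is modelled by score(S, r). -/

import Mathlib

/-- An RDF node: a URI or a literal. -/
inductive RNode where
  | uri : ℕ → RNode
  | lit : ℕ → RNode
deriving DecidableEq

/-- A term of a triple pattern: a constant (URI or literal) or a variable. -/
inductive RTerm where
  | cst : RNode → RTerm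
  | var : ℕ → RTerm
deriving DecidableEq

abbrev Triple := RNode × RNode × RNode
abbrev TPat := RTerm × RTerm × RTerm

def RNode.isLit : RNode → Prop
  | .lit _ => True
  | .uri _ => False

def applyT (m : ℕ → RNode) : RTerm → RNode
  | .cst c => c
  | .var v => m v

def applyTriple (m : ℕ → RNode) (p : TPat) : Triple :=
  (applyT m p.1, applyT m p.2.1, applyT m p.2.2)

/-- Variable `v` occurs in triple pattern `p`. -/
def occursIn (v : ℕ) (p : TPat) : Prop :=
  p.1 = RTerm.var v ∨ p.2.1 = RTerm.var v ∨ p.2.2 = RTerm.var v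

def varsPat (P : Set TPat) : Set ℕ := { v | ∃ p ∈ P, occursIn v p }

def constIn (c : RNode) (p : TPat) : Prop :=
  p.1 = RTerm.cst c ∨ p.2.1 = RTerm.cst c ∨ p.2.2 = RTerm.cst c

def constsPat (P : Set TPat) : Set RNode := { c | ∃ p ∈ P, constIn c p }

def constsGraph (I : Set Triple) : Set RNode :=
  { c | ∃ t ∈ I, t.1 = c ∨ t.2.1 = c ∨ t.2.2 = c }

/-- `I` is an instance of the triplestore schema `⟨G, Δ⟩`: every triple of `I`
is the image of some pattern of `G` under a mapping that binds no variable of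
the no-literal set `Δ` (occurring in the pattern) to a literal. -/
def isInstance (G : Set TPat) (Δ : Set ℕ) (I : Set Triple) : Prop :=
  ∀ t ∈ I, ∃ p ∈ G, ∃ m : ℕ → RNode,
    applyTriple m p = t ∧ ∀ v ∈ Δ, occursIn v p → ¬ (m v).isLit

/-- The sandbox graph: every variable of every pattern replaced by `lam`. -/
def sandbox (G : Set TPat) (lam : RNode) : Set Triple :=
  (applyTriple (fun _ => lam)) '' G

/-- One position of a rewriting: kept unchanged or replaced with `lam`. -/
def rewriteT (lam : RNode) (a b : RTerm) : Prop := b = a ∨ b = RTerm.cst lam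

/-- `q` is obtained from the triple pattern `p` by replacing any subset of its
three positions with the fresh constant `lam`. -/
def rewriteTriple (lam : RNode) (p q : TPat) : Prop :=
  rewriteT lam p.1 q.1 ∧ rewriteT lam p.2.1 q.2.1 ∧ rewriteT lam p.2.2 q.2.2

/-- No literal occurs among the constants of a graph pattern. -/
def litFree (P : Set TPat) : Prop := ∀ c ∈ constsPat P, ¬ c.isLit

/-- `t` is an instance of `unpack(g)`: since `unpack` replaces each occurrence
of `λ` in `g` by a distinct fresh variable (added to the no-literal set), `t`
must agree with `g` on every non-`λ` position and carry a non-literal at every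
`λ` position. -/
def matchesUnpack (lam : RNode) (g t : Triple) : Prop :=
  (g.1 = t.1 ∨ (g.1 = lam ∧ ¬ t.1.isLit)) ∧
  (g.2.1 = t.2.1 ∨ (g.2.1 = lam ∧ ¬ t.2.1.isLit)) ∧
  (g.2.2 = t.2.2 ∨ (g.2.2 = lam ∧ ¬ t.2.2.isLit))

/-!
Each antecedent triple `m(p) ∈ I` is an instance of a schema pattern `g`. Replacing by `λ` the
positions of `p` at which `g` has a variable gives a rewriting `q ∈ Q(A)`, and the mapping `m*`
that keeps `m v` when it is a constant of the sandbox graph and sends `v` to `λ` otherwise maps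
`q` onto the sandbox triple of `g`: at a constant position of `g`, `m v` is that very constant.
Since the schema is literal-free and its variables are no-literal, `I` contains no literal, so
every position at which `m*(c)` carries `λ` carries a non-literal in `t = m(c)`.
-/

def scoreTerm (lam : RNode) (a b : RTerm) : RTerm :=
  match b with
  | .var _ => .cst lam
  | .cst _ => a

def scoreTriple (lam : RNode) (p g : TPat) : TPat :=
  (scoreTerm lam p.1 g.1, scoreTerm lam p.2.1 g.2.1, scoreTerm lam p.2.2 g.2.2)

open Classical in
noncomputable def scoreMap (S : Set RNode) (lam : RNode) (m : ℕ → RNode) (v : ℕ) : RNode :=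
  if m v ∈ S then m v else lam

section Terms

variable {lam : RNode}

lemma rewriteTriple_scoreTriple (p g : TPat) : rewriteTriple lam p (scoreTriple lam p g) := by
  have key (a b : RTerm) : rewriteT lam a (scoreTerm lam a b) := by
    cases b
    · exact Or.inl rfl
    · exact Or.inr rfl
  exact ⟨key _ _, key _ _, key _ _⟩

lemma applyT_scoreTerm {S : Set RNode} {m mg : ℕ → RNode} {a b : RTerm}
    (heq : applyT mg b = applyT m a) (hS : applyT (fun _ => lam) b ∈ S) :
    applyT (scoreMap S lam m) (scoreTerm lam a b) = applyT (fun _ => lam) b := by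
  cases b with
  | var => rfl
  | cst k =>
    cases a with
    | cst => exact heq.symm
    | var v =>
      change k = m v at heq
      subst heq
      exact if_pos hS

lemma mem_or_mem_of_applyT_eq {S : Set RNode} {mg : ℕ → RNode} {b : RTerm} {x : RNode}
    (heq : applyT mg b = x) (hS : applyT (fun _ => lam) b ∈ S) : lam ∈ S ∨ x ∈ S := by
  cases b with
  | cst => exact Or.inr (heq ▸ hS)
  | var => exact Or.inl hS

lemma not_isLit_applyT {mg : ℕ → RNode} {b : RTerm} (hcst : ∀ k, b = .cst k → ¬ k.isLit)
    (hvar : ∀ w, b = .var w → ¬ (mg w).isLit) : ¬ (applyT mg b).isLit := by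
  cases b with
  | cst k => exact hcst k rfl
  | var w => exact hvar w rfl

end Terms

section Triples

variable {lam : RNode} {T : Set Triple} {m mg : ℕ → RNode} {p g : TPat}

lemma applyTriple_eq_iff :
    applyTriple mg g = applyTriple m p ↔ applyT mg g.1 = applyT m p.1 ∧
      applyT mg g.2.1 = applyT m p.2.1 ∧ applyT mg g.2.2 = applyT m p.2.2 := by
  simp only [applyTriple, Prod.ext_iff]

lemma applyTriple_scoreTriple (heq : applyTriple mg g = applyTriple m p)
    (hT : applyTriple (fun _ => lam) g ∈ T) :
    applyTriple (scoreMap (constsGraph T) lam m) (scoreTriple lam p g) =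
      applyTriple (fun _ => lam) g := by
  obtain ⟨h₁, h₂, h₃⟩ := applyTriple_eq_iff.mp heq
  have e₁ := applyT_scoreTerm (S := constsGraph T) h₁ ⟨_, hT, Or.inl rfl⟩
  have e₂ := applyT_scoreTerm (S := constsGraph T) h₂ ⟨_, hT, Or.inr (Or.inl rfl)⟩
  have e₃ := applyT_scoreTerm (S := constsGraph T) h₃ ⟨_, hT, Or.inr (Or.inr rfl)⟩
  simp only [applyTriple, scoreTriple, e₁, e₂, e₃]

lemma scoreMap_mem_constsGraph {v : ℕ} (heq : applyTriple mg g = applyTriple m p)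
    (hT : applyTriple (fun _ => lam) g ∈ T) (hv : occursIn v p) :
    scoreMap (constsGraph T) lam m v ∈ constsGraph T := by
  have hlam_or : lam ∈ constsGraph T ∨ m v ∈ constsGraph T := by
    obtain ⟨h₁, h₂, h₃⟩ := applyTriple_eq_iff.mp heq
    rcases hv with h | h | h
    · exact mem_or_mem_of_applyT_eq (h₁.trans (by rw [h]; rfl)) ⟨_, hT, Or.inl rfl⟩
    · exact mem_or_mem_of_applyT_eq (h₂.trans (by rw [h]; rfl)) ⟨_, hT, Or.inr (Or.inl rfl)⟩
    · exact mem_or_mem_of_applyT_eq (h₃.trans (by rw [h]; rfl)) ⟨_, hT, Or.inr (Or.inr rfl)⟩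
  unfold scoreMap
  split_ifs with h
  · exact h
  · exact hlam_or.resolve_right h

lemma mem_constsGraph_of_occursIn {I : Set Triple} {v : ℕ} (hp : applyTriple m p ∈ I)
    (hv : occursIn v p) : m v ∈ constsGraph I := by
  refine ⟨_, hp, ?_⟩
  rcases hv with h | h | h <;> simp only [applyTriple, h, applyT, true_or, or_true]

lemma not_isLit_of_mem_constsGraph {G : Set TPat} {I : Set Triple} (hG : litFree G)
    (hI : isInstance G (varsPat G) I) {x : RNode} (hx : x ∈ constsGraph I) : ¬ x.isLit := by
  obtain ⟨t, ht, hxt⟩ := hx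
  obtain ⟨g, hg, mg, rfl, hnl⟩ := hI t ht
  rcases hxt with rfl | rfl | rfl
  · exact not_isLit_applyT (fun k hk => hG k ⟨g, hg, Or.inl hk⟩)
      (fun w hw => hnl w ⟨g, hg, Or.inl hw⟩ (Or.inl hw))
  · exact not_isLit_applyT (fun k hk => hG k ⟨g, hg, Or.inr (Or.inl hk)⟩)
      (fun w hw => hnl w ⟨g, hg, Or.inr (Or.inl hw)⟩ (Or.inr (Or.inl hw)))
  · exact not_isLit_applyT (fun k hk => hG k ⟨g, hg, Or.inr (Or.inr hk)⟩)
      (fun w hw => hnl w ⟨g, hg, Or.inr (Or.inr hw)⟩ (Or.inr (Or.inr hw)))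

lemma matchesUnpack_scoreMap (S : Set RNode) (c : TPat)
    (hc : ∀ v, occursIn v c → ¬ (m v).isLit) :
    matchesUnpack lam (applyTriple (scoreMap S lam m) c) (applyTriple m c) := by
  have key (a : RTerm) (ha : ∀ v, a = .var v → occursIn v c) :
      applyT (scoreMap S lam m) a = applyT m a ∨
        (applyT (scoreMap S lam m) a = lam ∧ ¬ (applyT m a).isLit) := by
    cases a with
    | cst => exact Or.inl rfl
    | var v =>
      change scoreMap S lam m v = m v ∨ (scoreMap S lam m v = lam ∧ ¬ (m v).isLit)
      unfold scoreMap
      split_ifs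
      · exact Or.inl rfl
      · exact Or.inr ⟨rfl, hc v (ha v rfl)⟩
  exact ⟨key c.1 fun v => Or.inl, key c.2.1 fun v => Or.inr ∘ Or.inl,
    key c.2.2 fun v => Or.inr ∘ Or.inr⟩

end Triples

theorem score_complete_general (G A C : Set TPat)
    (lam : RNode)
    (hG : litFree G)
    (hnoex : varsPat C ⊆ varsPat A)
    (I : Set Triple) (hI : isInstance G (varsPat G) I)
    (m : ℕ → RNode) (hm : ∀ p ∈ A, applyTriple m p ∈ I)
    (c : TPat) (hc : c ∈ C) (t : Triple)
    (ht : applyTriple m c = t) :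
    ∃ (f : TPat → TPat) (m' : ℕ → RNode),
      (∀ p ∈ A, rewriteTriple lam p (f p)) ∧
      (∀ p ∈ A, applyTriple m' (f p) ∈ sandbox G lam) ∧
      (∀ v ∈ varsPat A, m' v ∈ constsGraph (sandbox G lam)) ∧
      ∃ c' ∈ C, matchesUnpack lam (applyTriple m' c') t := by
  choose! W hWG mg hmg using fun p hp => hI _ (hm p hp)
  have hsandbox : ∀ p ∈ A, applyTriple (fun _ => lam) (W p) ∈ sandbox G lam :=
    fun p hp => ⟨W p, hWG p hp, rfl⟩
  refine ⟨fun p => scoreTriple lam p (W p), scoreMap (constsGraph (sandbox G lam)) lam m,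
    fun p _ => rewriteTriple_scoreTriple p (W p), fun p hp => ?_, ?_, c, hc, ?_⟩
  · rw [applyTriple_scoreTriple (hmg p hp).1 (hsandbox p hp)]
    exact hsandbox p hp
  · rintro v ⟨p, hp, hv⟩
    exact scoreMap_mem_constsGraph (hmg p hp).1 (hsandbox p hp) hv
  · rw [← ht]
    refine matchesUnpack_scoreMap _ c fun v hv => ?_
    obtain ⟨p, hp, hvp⟩ := hnoex ⟨c, hc, hv⟩
    exact not_isLit_of_mem_constsGraph hG hI (mem_constsGraph_of_occursIn (hm p hp) hvp)

/-- Completeness of the score construction in the literal-free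
case: every triple inferable by one application of `r : A → C` on an instance
`I` of `S` (and not already in `I`) is an instance of `unpack(m*({c}))` for
some rewriting `q ∈ Q(A)`, mapping `m* ∈ ⟦q⟧_{S(S)}` and pattern `c ∈ C`. -/
theorem score_complete (G A C : Set TPat)
    (n : ℕ) (lam : RNode) (hlam : lam = RNode.uri n)
    (hG : litFree G) (hA : litFree A) (hC : litFree C)
    (hnoex : varsPat C ⊆ varsPat A)
    (huniqG : ∀ v : ℕ, ∀ p₁ ∈ G, ∀ p₂ ∈ G, occursIn v p₁ → occursIn v p₂ → p₁ = p₂)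
    (huniqC : ∀ v : ℕ, ∀ p₁ ∈ C, ∀ p₂ ∈ C, occursIn v p₁ → occursIn v p₂ → p₁ = p₂)
    (hfresh : lam ∉ constsPat G ∪ constsPat A ∪ constsPat C)
    (I : Set Triple) (hI : isInstance G (varsPat G) I)
    (m : ℕ → RNode) (hm : ∀ p ∈ A, applyTriple m p ∈ I)
    (c : TPat) (hc : c ∈ C) (t : Triple)
    (ht : applyTriple m c = t) (htI : t ∉ I) :
    ∃ (f : TPat → TPat) (m' : ℕ → RNode),
      (∀ p ∈ A, rewriteTriple lam p (f p)) ∧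
      (∀ p ∈ A, applyTriple m' (f p) ∈ sandbox G lam) ∧
      (∀ v ∈ varsPat A, m' v ∈ constsGraph (sandbox G lam)) ∧
      ∃ c' ∈ C, matchesUnpack lam (applyTriple m' c') t :=
  score_complete_general G A C lam hG hnoex I hI m hm c hc t ht
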